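/- Let f be a real binary form of degree n ≥ 3 such that every nontrivial real directional derivative α f_x + β f_y has n−1 distinct real roots. Then the Hessian determinant H(f) = f_xx f_yy − f_xy² never vanishes on ℝ² \ {(0,0)}. -/

import Mathlib

/-!
If `H(f)` vanished at `v ≠ 0`, the Hessian matrix of `f` at `v` would have a nonzero kernel
vector `(α, β)`, so that the directional derivative `g = α f_x + β f_y` has vanishing gradient
at `v`. By Euler's identity `g` itself vanishes at `v`, so `v` is a singular zero of `g`. But a
product of pairwise non-proportional linear forms has no singular zero off the origin: exactly
one factor vanishes at `v`, and the gradient of `g` there is a nonzero multiple of that factor's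
coefficient vector.
-/

open MvPolynomial

/-- The real linear binary form `p.1 * x + p.2 * y`. -/
noncomputable def lin (p : ℝ × ℝ) : MvPolynomial (Fin 2) ℝ :=
  C p.1 * X 0 + C p.2 * X 1

/-- A binary form `f` has `m` distinct real roots: it factors over `ℝ` into `m`
pairwise non-proportional (nonzero) real linear forms, up to a nonzero constant. -/
noncomputable def HasDistinctRealRoots (f : MvPolynomial (Fin 2) ℝ) (m : ℕ) : Prop :=
  ∃ (c : ℝ) (l : Fin m → ℝ × ℝ), c ≠ 0 ∧ (∀ i, l i ≠ 0) ∧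
    (∀ i j, i ≠ j → (l i).1 * (l j).2 - (l j).1 * (l i).2 ≠ 0) ∧
    f = C c * ∏ i, lin (l i)
/-- The Hessian determinant `f_xx f_yy - f_xy ^ 2` of a binary form. -/
noncomputable def hess (f : MvPolynomial (Fin 2) ℝ) : MvPolynomial (Fin 2) ℝ :=
  pderiv 0 (pderiv 0 f) * pderiv 1 (pderiv 1 f) - (pderiv 0 (pderiv 1 f)) ^ 2

theorem MvPolynomial.pderiv_pderiv_comm {R σ : Type*} [CommRing R] (i j : σ)
    (f : MvPolynomial σ R) : pderiv i (pderiv j f) = pderiv j (pderiv i f) := by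
  classical
  -- the commutator is a derivation, and it kills each `X k` because `pderiv j (X k)` is constant
  have hcomm : ⁅pderiv i, pderiv j⁆ = (0 : Derivation R (MvPolynomial σ R) _) :=
    derivation_ext fun k => by
      rw [Derivation.commutator_apply]
      simp [pderiv_X, Pi.single_apply, apply_ite]
  have := congr($hcomm f)
  rwa [Derivation.commutator_apply, Derivation.zero_apply, sub_eq_zero] at this

theorem MvPolynomial.IsHomogeneous.eval_eq_zero_of_eval_pderiv_eq_zero {R σ : Type*}
    [CommRing R] [NoZeroDivisors R] [CharZero R] [Fintype σ] {g : MvPolynomial σ R} {m : ℕ}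
    (hg : g.IsHomogeneous m) (hm : m ≠ 0) {v : σ → R} (hv : ∀ i, eval v (pderiv i g) = 0) :
    eval v g = 0 := by
  have euler := congr(eval v $(hg.sum_X_mul_pderiv))
  simp only [map_sum, map_mul, hv, mul_zero, Finset.sum_const_zero, nsmul_eq_mul, map_natCast]
    at euler
  exact (mul_eq_zero.mp euler.symm).resolve_left (Nat.cast_ne_zero.mpr hm)

theorem MvPolynomial.eval_pderiv_mul_of_eval_eq_zero {R σ : Type*} [CommSemiring R]
    {p q : MvPolynomial σ R} {v : σ → R} (hp : eval v p = 0) (i : σ) :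
    eval v (pderiv i (p * q)) = eval v (pderiv i p) * eval v q := by
  simp [hp, mul_comm]

theorem lin_isHomogeneous (p : ℝ × ℝ) : (lin p).IsHomogeneous 1 :=
  (isHomogeneous_C_mul_X _ 0).add (isHomogeneous_C_mul_X _ 1)

@[simp]
theorem eval_lin (p : ℝ × ℝ) (x y : ℝ) : eval ![x, y] (lin p) = p.1 * x + p.2 * y := by
  simp [lin]

@[simp]
theorem pderiv_zero_lin (p : ℝ × ℝ) : pderiv 0 (lin p) = C p.1 := by
  simp [lin]

@[simp]
theorem pderiv_one_lin (p : ℝ × ℝ) : pderiv 1 (lin p) = C p.2 := by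
  simp [lin]

theorem eq_zero_of_eval_lin_eq_zero {p q : ℝ × ℝ} (hpq : p.1 * q.2 - q.1 * p.2 ≠ 0) {x y : ℝ}
    (hp : eval ![x, y] (lin p) = 0) (hq : eval ![x, y] (lin q) = 0) : (x, y) = (0, 0) := by
  rw [eval_lin] at hp hq
  have hx : (p.1 * q.2 - q.1 * p.2) * x = 0 := by linear_combination q.2 * hp - p.2 * hq
  have hy : (p.1 * q.2 - q.1 * p.2) * y = 0 := by linear_combination p.1 * hq - q.1 * hp
  simp [(mul_eq_zero.mp hx).resolve_left hpq, (mul_eq_zero.mp hy).resolve_left hpq]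

namespace HasDistinctRealRoots

variable {g : MvPolynomial (Fin 2) ℝ} {m : ℕ}

theorem isHomogeneous (hg : HasDistinctRealRoots g m) : g.IsHomogeneous m := by
  obtain ⟨c, l, -, -, -, rfl⟩ := hg
  simpa using (isHomogeneous_C _ c).mul
    (IsHomogeneous.prod Finset.univ _ (fun _ => 1) fun i _ => lin_isHomogeneous (l i))

theorem eq_zero_of_eval_pderiv_eq_zero (hg : HasDistinctRealRoots g m) (hm : m ≠ 0) {x y : ℝ}
    (h0 : eval ![x, y] (pderiv 0 g) = 0) (h1 : eval ![x, y] (pderiv 1 g) = 0) :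
    (x, y) = (0, 0) := by
  have hgv : eval ![x, y] g = 0 :=
    hg.isHomogeneous.eval_eq_zero_of_eval_pderiv_eq_zero hm (Fin.forall_fin_two.mpr ⟨h0, h1⟩)
  obtain ⟨c, l, hc, hl, hsep, rfl⟩ := hg
  obtain ⟨k, -, hk⟩ : ∃ k ∈ Finset.univ, eval ![x, y] (lin (l k)) = 0 := by
    simpa [hc, Finset.prod_eq_zero_iff] using hgv
  by_contra hxy
  have hQ : eval ![x, y] (∏ i ∈ Finset.univ.erase k, lin (l i)) ≠ 0 := by
    rw [map_prod, Finset.prod_ne_zero_iff]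
    exact fun j hj hj0 => hxy (eq_zero_of_eval_lin_eq_zero (hsep j k (Finset.ne_of_mem_erase hj))
      hj0 hk)
  rw [← Finset.mul_prod_erase _ _ (Finset.mem_univ k), pderiv_C_mul, map_mul,
    eval_pderiv_mul_of_eval_eq_zero hk] at h0 h1
  simp only [pderiv_zero_lin, pderiv_one_lin, eval_C, mul_eq_zero, hc, hQ, or_false,
    false_or] at h0 h1
  exact hl k (Prod.ext h0 h1)

end HasDistinctRealRoots

theorem exists_ne_zero_of_mul_sub_sq_eq_zero {K : Type*} [Field K] {a b c : K}
    (h : a * c - b ^ 2 = 0) :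
    ∃ α β : K, (α, β) ≠ (0, 0) ∧ α * a + β * b = 0 ∧ α * b + β * c = 0 := by
  by_cases hab : a = 0 ∧ b = 0
  · exact ⟨1, 0, by simp, by simp [hab.1, hab.2], by simp [hab.2]⟩
  · refine ⟨b, -a, fun hba => hab ?_, by ring, by linear_combination -h⟩
    simp only [Prod.mk.injEq, neg_eq_zero] at hba
    exact ⟨hba.2, hba.1⟩

theorem stmt_12_general (n : ℕ) (hn : 3 ≤ n) (f : MvPolynomial (Fin 2) ℝ)
    (hder : ∀ α β : ℝ, (α, β) ≠ (0, 0) →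
      HasDistinctRealRoots (C α * pderiv 0 f + C β * pderiv 1 f) (n - 1)) :
    ∀ x y : ℝ, (x, y) ≠ (0, 0) → eval ![x, y] (hess f) ≠ 0 := by
  intro x y hxy hH
  obtain ⟨α, β, hαβ, h0, h1⟩ := exists_ne_zero_of_mul_sub_sq_eq_zero (by simpa [hess] using hH)
  refine hxy ((hder α β hαβ).eq_zero_of_eval_pderiv_eq_zero (by omega) ?_ ?_)
  · simpa using h0
  · simpa [pderiv_pderiv_comm 1 0 f] using h1

theorem stmt_12 (n : ℕ) (hn : 3 ≤ n) (f : MvPolynomial (Fin 2) ℝ)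
    (hhom : f.IsHomogeneous n)
    (hder : ∀ α β : ℝ, (α, β) ≠ (0, 0) →
      HasDistinctRealRoots (C α * pderiv 0 f + C β * pderiv 1 f) (n - 1)) :
    ∀ x y : ℝ, (x, y) ≠ (0, 0) → eval ![x, y] (hess f) ≠ 0 :=
  stmt_12_general n hn f hder
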